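/- arXiv:0704.3314 — 2 statements merged into one kernel-verified Lean document; each statement's English description precedes it below -/
import Mathlib

section
/- Let A = {a_1, ..., a_m} be a finite subset of ℤ^n that generates ℤ^n as a group. Then there exists a constant C > 0 with the following property: for every choice of real coefficients λ_1, ..., λ_m such that the linear combination λ_1 a_1 + ... + λ_m a_m is an integral point (i.e., lies in ℤ^n), there exist integer coefficients n_1, ..., n_m such that n_1 a_1 + ... + n_m a_m = λ_1 a_1 + ... + λ_m a_m and ∑_{i=1}^m |n_i − λ_i| < C. -/
/-- The coordinatewise embedding of `ℤ^n` into `ℝ^n`. -/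
def toReal {n : ℕ} (z : Fin n → ℤ) : Fin n → ℝ := fun j => (z j : ℝ)

/-- **Khovanskii's first lemma.** If `A = {a 1, …, a m} ⊆ ℤ^n` generates `ℤ^n` as a
group, then there is a constant `C > 0` such that any real linear combination of the `a i`
that is an integral point can be rewritten as an integral linear combination of the `a i`
whose coefficients differ from the original ones by less than `C` in total. -/
theorem stmt_0 {n m : ℕ} (a : Fin m → (Fin n → ℤ)) (hinj : Function.Injective a)
    (hgen : AddSubgroup.closure (Set.range a) = (⊤ : AddSubgroup (Fin n → ℤ))) :
    ∃ C : ℝ, 0 < C ∧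
      ∀ lam : Fin m → ℝ,
        (∃ z : Fin n → ℤ, toReal z = ∑ i, lam i • toReal (a i)) →
        ∃ N : Fin m → ℤ,
          (∑ i, (N i : ℝ) • toReal (a i)) = ∑ i, lam i • toReal (a i) ∧
          (∑ i, |(N i : ℝ) - lam i|) < C := by
  classical
  -- every integer vector is an integer combination of the `a i`
  have hspan : Submodule.span ℤ (Set.range a) = ⊤ := by
    apply Submodule.toAddSubgroup_injective
    rw [Submodule.span_int_eq_addSubgroupClosure, hgen]; rfl
  have hrep : ∀ w : Fin n → ℤ, ∃ c : Fin m → ℤ, ∑ i, c i • a i = w := by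
    intro w
    have hw : w ∈ Submodule.span ℤ (Set.range a) := hspan ▸ Submodule.mem_top
    exact Submodule.mem_span_range_iff_exists_fun ℤ |>.mp hw
  choose c hc using hrep
  -- the finite box
  set B : ℤ := ∑ i, ∑ j, |a i j| with hB
  set S : Finset (Fin n → ℤ) := Finset.Icc (fun _ => -B) (fun _ => B) with hS
  set C : ℝ := m + 1 + ∑ w ∈ S, ∑ i, |(c w i : ℝ)| with hC
  have hCsum : (0:ℝ) ≤ ∑ w ∈ S, ∑ i, |(c w i : ℝ)| :=
    Finset.sum_nonneg fun w _ => Finset.sum_nonneg fun i _ => abs_nonneg _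
  refine ⟨C, by positivity, ?_⟩
  intro lam ⟨z, hz⟩
  -- coordinatewise form of hz
  have hzj : ∀ j, (z j : ℝ) = ∑ i, lam i * (a i j : ℝ) := by
    intro j
    have := congrFun hz j
    simpa [toReal, Finset.sum_apply, smul_eq_mul] using this
  set w : Fin n → ℤ := z - ∑ i, ⌊lam i⌋ • a i with hw
  have hwj : ∀ j, (w j : ℝ) = ∑ i, Int.fract (lam i) * (a i j : ℝ) := by
    intro j
    have h1 : (w j : ℝ) = (z j : ℝ) - ∑ i, (⌊lam i⌋ : ℝ) * (a i j : ℝ) := by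
      simp only [hw, Pi.sub_apply, Finset.sum_apply, Pi.smul_apply, smul_eq_mul]
      push_cast
      ring
    rw [h1, hzj, ← Finset.sum_sub_distrib]
    refine Finset.sum_congr rfl fun i _ => ?_
    rw [Int.fract]; ring
  have hwb : ∀ j, |w j| ≤ B := by
    intro j
    have hr : |(w j : ℝ)| ≤ (B : ℝ) := by
      rw [hwj]
      calc |∑ i, Int.fract (lam i) * (a i j : ℝ)|
          ≤ ∑ i, |Int.fract (lam i) * (a i j : ℝ)| := Finset.abs_sum_le_sum_abs _ _
        _ ≤ ∑ i, |(a i j : ℝ)| := by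
            refine Finset.sum_le_sum fun i _ => ?_
            rw [abs_mul]
            have h1 : |Int.fract (lam i)| ≤ 1 := by
              rw [abs_of_nonneg (Int.fract_nonneg _)]
              exact le_of_lt (Int.fract_lt_one _)
            nlinarith [abs_nonneg ((a i j : ℝ))]
        _ ≤ (B : ℝ) := by
            rw [hB]; push_cast
            refine Finset.sum_le_sum fun i _ => ?_
            exact Finset.single_le_sum (f := fun j' => |(a i j' : ℝ)|)
              (fun j' _ => abs_nonneg _) (Finset.mem_univ j)
    rw [← Int.cast_abs] at hr
    exact_mod_cast hr
  have hwS : w ∈ S := by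
    rw [hS, Finset.mem_Icc]
    exact ⟨fun j => (abs_le.mp (hwb j)).1, fun j => (abs_le.mp (hwb j)).2⟩
  refine ⟨fun i => ⌊lam i⌋ + c w i, ?_, ?_⟩
  · -- the sums agree
    have hint : ∑ i, (⌊lam i⌋ + c w i) • a i = z := by
      rw [Finset.sum_congr rfl (fun i _ => add_smul (⌊lam i⌋) (c w i) (a i)),
        Finset.sum_add_distrib, hc w, hw]
      abel
    rw [← hz]
    funext j
    have h2 := congrFun (congrArg toReal hint) j
    simp only [toReal, Finset.sum_apply, Pi.smul_apply, smul_eq_mul] at h2 ⊢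
    rw [← h2]
    push_cast
    rfl
  · calc ∑ i, |((⌊lam i⌋ + c w i : ℤ) : ℝ) - lam i|
        ≤ ∑ i, (Int.fract (lam i) + |(c w i : ℝ)|) := by
          refine Finset.sum_le_sum fun i _ => ?_
          have h3 : ((⌊lam i⌋ + c w i : ℤ) : ℝ) - lam i
              = (c w i : ℝ) - Int.fract (lam i) := by
            rw [Int.fract]; push_cast; ring
          rw [h3]
          calc |(c w i : ℝ) - Int.fract (lam i)|
              ≤ |(c w i : ℝ)| + |Int.fract (lam i)| := abs_sub _ _
            _ = Int.fract (lam i) + |(c w i : ℝ)| := by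
                rw [abs_of_nonneg (Int.fract_nonneg (lam i))]; ring
      _ = (∑ i, Int.fract (lam i)) + ∑ i, |(c w i : ℝ)| := Finset.sum_add_distrib
      _ ≤ m + ∑ w' ∈ S, ∑ i, |(c w' i : ℝ)| := by
          gcongr
          · calc ∑ i, Int.fract (lam i) ≤ ∑ _i : Fin m, (1:ℝ) :=
                Finset.sum_le_sum fun i _ => le_of_lt (Int.fract_lt_one _)
              _ = m := by simp
          · exact Finset.single_le_sum (f := fun w' => ∑ i, |(c w' i : ℝ)|)
              (fun w' _ => Finset.sum_nonneg fun i _ => abs_nonneg _) hwS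
      _ < C := by rw [hC]; linarith
end

section
/- Let A = {a_1, ..., a_m} be a finite subset of ℤ^n with 0 ∈ A, such that the differences of elements of A generate ℤ^n as a group, and let C be a constant with the property of Khovanskii's first lemma (for every real-coefficient combination ∑ λ_i a_i that is an integral point there exist integers n_i with ∑ n_i a_i = ∑ λ_i a_i and ∑ |n_i − λ_i| < C). Let h be a positive integer and define Δ(h,C) = { ∑_{i=1}^m λ_i a_i : λ_i ∈ ℝ, λ_i ≥ C for all i, ∑ λ_i ≤ h − C }. Then every integral point of Δ(h,C) belongs to the h-fold sumset hA. -/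
/-- The `h`-fold sumset `hA = {x₁ + ⋯ + x_h : xᵢ ∈ A}`. -/
def sumset {n : ℕ} (h : ℕ) (A : Set (Fin n → ℤ)) : Set (Fin n → ℤ) :=
  {z | ∃ f : Fin h → (Fin n → ℤ), (∀ i, f i ∈ A) ∧ z = ∑ i, f i}

lemma mem_sumset_succ {n h : ℕ} {A : Set (Fin n → ℤ)} {x y : Fin n → ℤ}
    (hx : x ∈ A) (hy : y ∈ sumset h A) : x + y ∈ sumset (h + 1) A := by
  obtain ⟨f, hf, rfl⟩ := hy
  exact ⟨Fin.cons x f, fun i => Fin.cases hx hf i, (Fin.sum_cons x f).symm⟩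

lemma key_sumset {n m : ℕ} (a : Fin m → (Fin n → ℤ))
    (h0 : (0 : Fin n → ℤ) ∈ Set.range a) :
    ∀ h : ℕ, ∀ N : Fin m → ℕ, (∑ i, N i) ≤ h →
      (∑ i, (N i : ℤ) • a i) ∈ sumset h (Set.range a) := by
  intro h
  induction h with
  | zero =>
    intro N hN
    have hz : ∀ i, N i = 0 := by
      intro i
      exact Finset.sum_eq_zero_iff.mp (Nat.le_zero.mp hN) i (Finset.mem_univ i)
    refine ⟨finZeroElim, fun i => i.elim0, ?_⟩
    simp [hz]
  | succ h ih =>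
    intro N hN
    by_cases hj : ∃ j, 0 < N j
    · obtain ⟨j, hjpos⟩ := hj
      set N' : Fin m → ℕ := Function.update N j (N j - 1) with hN'
      have hsum' : (∑ i, N' i) ≤ h := by
        have h1 : ∑ i, N' i + 1 ≤ ∑ i, N i := by
          rw [hN', Finset.sum_update_of_mem (Finset.mem_univ j),
            ← Finset.add_sum_erase _ N (Finset.mem_univ j), Finset.erase_eq]
          omega
        omega
      have heq : (∑ i, (N i : ℤ) • a i) - (∑ i, (N' i : ℤ) • a i) = a j := by
        rw [← Finset.sum_sub_distrib]
        simp_rw [← sub_smul]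
        rw [Finset.sum_eq_single j]
        · have hc : (N j : ℤ) - (N' j : ℤ) = 1 := by
            simp only [hN', Function.update_self]
            omega
          rw [hc, one_smul]
        · intro i _ hij
          simp [hN', Function.update_of_ne hij]
        · intro habs
          exact absurd (Finset.mem_univ j) habs
      rw [sub_eq_iff_eq_add.mp heq]
      exact mem_sumset_succ ⟨j, rfl⟩ (ih N' hsum')
    · push_neg at hj
      have hz : ∀ i, N i = 0 := fun i => Nat.le_zero.mp (hj i)
      have h0' : (∑ i, (N i : ℤ) • a i) = 0 + ∑ i, (N i : ℤ) • a i := (zero_add _).symm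
      rw [h0']
      exact mem_sumset_succ h0 (ih N (by simp [hz]))

/-- **Khovanskii's second lemma.** Let `A = {a 1, …, a m} ⊆ ℤ^n` with `0 ∈ A`, whose
differences generate `ℤ^n` as a group, and let `C` be a constant as in Khovanskii's first
lemma.  For a positive integer `h`, every integral point of
`Δ(h,C) = {∑ λᵢ aᵢ : λᵢ ≥ C, ∑ λᵢ ≤ h - C}` belongs to the sumset `hA`. -/
theorem stmt_1 {n m : ℕ} (a : Fin m → (Fin n → ℤ)) (hinj : Function.Injective a)
    (h0 : (0 : Fin n → ℤ) ∈ Set.range a)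
    (hgen : AddSubgroup.closure {x : Fin n → ℤ | ∃ i j, x = a i - a j}
      = (⊤ : AddSubgroup (Fin n → ℤ)))
    (C : ℝ) (hCpos : 0 < C)
    (hC : ∀ lam : Fin m → ℝ,
      (∃ w : Fin n → ℤ, toReal w = ∑ i, lam i • toReal (a i)) →
      ∃ N : Fin m → ℤ,
        (∑ i, (N i : ℝ) • toReal (a i)) = ∑ i, lam i • toReal (a i) ∧
        (∑ i, |(N i : ℝ) - lam i|) < C)
    (h : ℕ) (hpos : 0 < h)
    (z : Fin n → ℤ)
    (hz : ∃ lam : Fin m → ℝ, (∀ i, C ≤ lam i) ∧ (∑ i, lam i) ≤ (h : ℝ) - C ∧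
      toReal z = ∑ i, lam i • toReal (a i)) :
    z ∈ sumset h (Set.range a) := by
  obtain ⟨lam, hlam1, hlam2, hlam3⟩ := hz
  obtain ⟨N, hNeq, hNlt⟩ := hC lam ⟨z, hlam3⟩
  have habs : ∀ i, |(N i : ℝ) - lam i| < C := by
    intro i
    calc |(N i : ℝ) - lam i| ≤ ∑ k, |(N k : ℝ) - lam k| :=
          Finset.single_le_sum (f := fun k => |(N k : ℝ) - lam k|)
            (fun k _ => abs_nonneg _) (Finset.mem_univ i)
      _ < C := hNlt
  have hNpos : ∀ i, 0 ≤ N i := by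
    intro i
    have h1 : lam i - (N i : ℝ) ≤ |(N i : ℝ) - lam i| := by
      rw [abs_sub_comm]; exact le_abs_self _
    have h2 := hlam1 i
    have h3 := habs i
    have h4 : (0 : ℝ) < (N i : ℝ) := by linarith
    exact_mod_cast h4.le
  have hsumle : (∑ i, N i) ≤ (h : ℤ) := by
    have h1 : ((∑ i, N i : ℤ) : ℝ) < h := by
      push_cast
      have h2 : ∑ i, (N i : ℝ) ≤ ∑ i, lam i + ∑ i, |(N i : ℝ) - lam i| := by
        rw [← Finset.sum_add_distrib]
        apply Finset.sum_le_sum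
        intro i _
        have := le_abs_self ((N i : ℝ) - lam i)
        linarith
      linarith
    have h5 : (∑ i, N i : ℤ) < (h : ℤ) := by exact_mod_cast h1
    omega
  have hzeq : z = ∑ i, N i • a i := by
    have hre : toReal z = toReal (∑ i, N i • a i) := by
      rw [hlam3, ← hNeq]
      funext j
      simp only [toReal, Finset.sum_apply, Pi.smul_apply, smul_eq_mul]
      push_cast
      ring
    funext j
    have hj := congrFun hre j
    simp only [toReal] at hj
    exact_mod_cast hj
  have hzeq2 : z = ∑ i, ((N i).toNat : ℤ) • a i := by
    rw [hzeq]
    congr 1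
    funext i
    rw [Int.toNat_of_nonneg (hNpos i)]
  have hsum2 : (∑ i, (N i).toNat) ≤ h := by
    have : ((∑ i, (N i).toNat : ℕ) : ℤ) ≤ (h : ℤ) := by
      push_cast
      calc ∑ i, ((N i).toNat : ℤ) = ∑ i, N i := by
            apply Finset.sum_congr rfl
            intro i _
            exact Int.toNat_of_nonneg (hNpos i)
        _ ≤ (h : ℤ) := hsumle
    exact_mod_cast this
  rw [hzeq2]
  exact key_sumset a h0 h (fun i => (N i).toNat) hsum2
end
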